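/- Let f : [0,T) × [0,1] → ℝⁿ be smooth with f(t,·) regular for each t, suppose ∂ₜf = V is purely normal on (0,T) × (0,1), that the endpoints f(t,0), f(t,1) are constant in t, and that the natural boundary condition κ(t,x) = ζ − ⟨ζ, τ(t,x)⟩τ(t,x) holds for x ∈ {0,1} and all t, for a fixed ζ ∈ ℝⁿ. Then at each boundary point x ∈ {0,1} and each t ∈ (0,T): ∇ₛ²(∂ₜf) = −⟨ζ, τ⟩∇ₛ(∂ₜf). -/

import Mathlib

open scoped RealInnerProductSpace
open MeasureTheory

noncomputable section

abbrev En (n : ℕ) := EuclideanSpace ℝ (Fin n)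

variable {n : ℕ}

/-- Arc-length derivative along `f`. -/
def aD (f g : ℝ → En n) : ℝ → En n := fun x => ‖deriv f x‖⁻¹ • deriv g x

/-- Iterated arc-length derivative. -/
def aDIter (f : ℝ → En n) : ℕ → (ℝ → En n) → ℝ → En n
  | 0, g => g
  | k + 1, g => aD f (aDIter f k g)

/-- Unit tangent vector. -/
def tang (f : ℝ → En n) : ℝ → En n := aD f f

/-- Curvature vector. -/
def curv (f : ℝ → En n) : ℝ → En n := aD f (tang f)

/-- Normal component of the arc-length derivative of a vector field along `f`. -/
def nS (f g : ℝ → En n) : ℝ → En n :=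
  fun x => aD f g x - ⟪aD f g x, tang f x⟫ • tang f x

/-- Iterated normal arc-length derivative. -/
def nSIter (f : ℝ → En n) : ℕ → (ℝ → En n) → ℝ → En n
  | 0, g => g
  | k + 1, g => nS f (nSIter f k g)

/-- Arc-length derivative of a scalar field along `f`. -/
def aDS (f : ℝ → En n) (g : ℝ → ℝ) : ℝ → ℝ := fun x => ‖deriv f x‖⁻¹ * deriv g x

/-- Length of the curve. -/
def len (f : ℝ → En n) : ℝ := ∫ x in (0:ℝ)..1, ‖deriv f x‖

/-- Willmore–Helfrich energy. -/
def WH (lam : ℝ) (ζ : En n) (f : ℝ → En n) : ℝ :=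
  (∫ x in (0:ℝ)..1, ((1/2) * ‖curv f x‖ ^ 2 - ⟪curv f x, ζ⟫) * ‖deriv f x‖) + lam * len f

/-- Time derivative of a time dependent field. -/
def pT (g : ℝ → ℝ → En n) : ℝ → ℝ → En n := fun t x => deriv (fun s => g s x) t

/-- Normal component (w.r.t. the curve `f t`) of the time derivative. -/
def nT (f g : ℝ → ℝ → En n) : ℝ → ℝ → En n :=
  fun t x => pT g t x - ⟪pT g t x, tang (f t) x⟫ • tang (f t) x

/-- Normal arc-length derivative of a time dependent field. -/
def nSF (f g : ℝ → ℝ → En n) : ℝ → ℝ → En n := fun t => nS (f t) (g t)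

/-- Tangential component of the velocity. -/
def tanComp (f : ℝ → ℝ → En n) : ℝ → ℝ → ℝ := fun t x => ⟪pT f t x, tang (f t) x⟫

/-- Normal velocity. -/
def normVel (f : ℝ → ℝ → En n) : ℝ → ℝ → En n :=
  fun t x => pT f t x - tanComp f t x • tang (f t) x

/-- Scale invariant `Lᵖ` norm of the `i`-th normal derivative of `g` along `f`. -/
def sN (f : ℝ → En n) (p : ℝ) (i : ℕ) (g : ℝ → En n) : ℝ :=
  len f ^ ((i : ℝ) + 1 - 1/p) * (∫ x in (0:ℝ)..1, ‖nSIter f i g x‖ ^ p * ‖deriv f x‖) ^ (1/p)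

/-- Scale invariant Sobolev-type norm. -/
def sNk (f : ℝ → En n) (k : ℕ) (g : ℝ → En n) : ℝ :=
  ∑ i ∈ Finset.range (k + 1), sN f 2 i g


/-!
For any smooth regular family, differentiating `τ = |∂ₓf|⁻¹ ∂ₓf` in time and commuting `∂ₜ∂ₓ`
gives `∂ₜτ = ∇ₛ(∂ₜf)`, so `∂ₓ∇ₛ(∂ₜf) = ∂ₜ∂ₓτ = ∂ₜ(|∂ₓf| κ)`. At a fixed endpoint `∂ₜf = 0`;
differentiating `⟨∂ₜf, τ⟩ = 0` in `x` there gives `⟨∂ₓ∂ₜf, τ⟩ = 0`, which is exactly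
`∂ₜ|∂ₓf| = 0`. Differentiating the natural boundary condition `κ = ζ - ⟨ζ, τ⟩τ` in time then gives
`∂ₛ∇ₛ(∂ₜf) = -⟨ζ, ∂ₜτ⟩τ - ⟨ζ, τ⟩∂ₜτ`, whose normal part is `-⟨ζ, τ⟩∇ₛ(∂ₜf)`.
-/

open Function Filter Topology Set

section Slices

variable {E : Type*} [NormedAddCommGroup E] [NormedSpace ℝ E]

theorem HasFDerivAt.hasDerivAt_prodMk_left {G : ℝ × ℝ → E} {G' : ℝ × ℝ →L[ℝ] E} {s x : ℝ}
    (h : HasFDerivAt G G' (s, x)) : HasDerivAt (fun r => G (r, x)) (G' (1, 0)) s :=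
  h.comp_hasDerivAt s ((hasDerivAt_id s).prodMk (hasDerivAt_const s x))

theorem HasFDerivAt.hasDerivAt_prodMk_right {G : ℝ × ℝ → E} {G' : ℝ × ℝ →L[ℝ] E} {s x : ℝ}
    (h : HasFDerivAt G G' (s, x)) : HasDerivAt (fun y => G (s, y)) (G' (0, 1)) x :=
  h.comp_hasDerivAt x ((hasDerivAt_const x s).prodMk (hasDerivAt_id x))

theorem hasDerivAt_deriv_comm {F : ℝ → ℝ → E} {s x : ℝ} (h : ContDiffAt ℝ 2 (uncurry F) (s, x)) :
    HasDerivAt (fun r => deriv (F r) x) (deriv (fun y => deriv (fun r => F r y) s) x) s := by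
  set G := uncurry F
  have hdiff : ∀ᶠ q in 𝓝 (s, x), DifferentiableAt ℝ G q :=
    (h.eventually (by simp)).mono fun q hq => hq.differentiableAt two_ne_zero
  have hD := ((h.fderiv_right (m := 1) le_rfl).differentiableAt one_ne_zero).hasFDerivAt
  have h_time : HasDerivAt (fun r => fderiv ℝ G (r, x) (0, 1))
      (fderiv ℝ (fderiv ℝ G) (s, x) (1, 0) (0, 1)) s := by
    simpa using (hD.clm_apply (hasFDerivAt_const ((0 : ℝ), (1 : ℝ)) _)).hasDerivAt_prodMk_left
  have h_space : HasDerivAt (fun y => fderiv ℝ G (s, y) (1, 0))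
      (fderiv ℝ (fderiv ℝ G) (s, x) (0, 1) (1, 0)) x := by
    simpa using (hD.clm_apply (hasFDerivAt_const ((1 : ℝ), (0 : ℝ)) _)).hasDerivAt_prodMk_right
  have e_time : (fun r => deriv (F r) x) =ᶠ[𝓝 s] fun r => fderiv ℝ G (r, x) (0, 1) := by
    filter_upwards [((Continuous.prodMk_left x).tendsto s).eventually hdiff] with r hr
    exact hr.hasFDerivAt.hasDerivAt_prodMk_right.deriv
  have e_space : (fun y => deriv (fun r => F r y) s) =ᶠ[𝓝 x] fun y => fderiv ℝ G (s, y) (1, 0) := by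
    filter_upwards [((Continuous.prodMk_right s).tendsto x).eventually hdiff] with y hy
    exact hy.hasFDerivAt.hasDerivAt_prodMk_left.deriv
  rw [e_space.deriv_eq, h_space.deriv, ← h.isSymmSndFDerivAt (by simp)]
  exact h_time.congr_of_eventuallyEq e_time

variable {k m : WithTop ℕ∞} {F : ℝ → ℝ → E}

theorem ContDiff.uncurry_deriv_right (h : ContDiff ℝ m (uncurry F)) (hkm : k + 1 ≤ m) :
    ContDiff ℝ k (uncurry fun s x => deriv (F s) x) := by
  have hdiff := h.differentiable (by rintro rfl; simp at hkm)
  convert (h.fderiv_right hkm).clm_apply (contDiff_const (c := ((0 : ℝ), (1 : ℝ)))) using 1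
  ext ⟨s, x⟩
  exact (hdiff _).hasFDerivAt.hasDerivAt_prodMk_right.deriv

theorem ContDiff.uncurry_deriv_left (h : ContDiff ℝ m (uncurry F)) (hkm : k + 1 ≤ m) :
    ContDiff ℝ k (uncurry fun s x => deriv (fun r => F r x) s) := by
  have hdiff := h.differentiable (by rintro rfl; simp at hkm)
  convert (h.fderiv_right hkm).clm_apply (contDiff_const (c := ((1 : ℝ), (0 : ℝ)))) using 1
  ext ⟨s, x⟩
  exact (hdiff _).hasFDerivAt.hasDerivAt_prodMk_left.deriv

end Slices

theorem deriv_eq_zero_of_eq_zero_on_Ioo {E : Type*} [NormedAddCommGroup E] [NormedSpace ℝ E]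
    {g : ℝ → E} {a b x : ℝ} (hab : a < b) (hx : x ∈ Icc a b) (hg : DifferentiableAt ℝ g x)
    (h0 : ∀ y ∈ Ioo a b, g y = 0) : deriv g x = 0 := by
  have hcl : x ∈ closure (Ioo a b) := by rwa [closure_Ioo hab.ne]
  have hgx : g x = 0 := hg.continuousAt.continuousWithinAt.eq_const_of_mem_closure hcl h0
  refine (uniqueDiffWithinAt_convex (convex_Ioo a b) ?_ hcl).eq_deriv _
    hg.hasDerivAt.hasDerivWithinAt ((hasDerivWithinAt_const x _ 0).congr h0 hgx)
  rwa [interior_Ioo, nonempty_Ioo]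

section Normalize

variable {E : Type*} [NormedAddCommGroup E] [InnerProductSpace ℝ E] {v : ℝ → E} {v' : E} {s : ℝ}

theorem HasDerivAt.norm (hv : HasDerivAt v v' s) (h0 : v s ≠ 0) :
    HasDerivAt (fun r => ‖v r‖) ⟪‖v s‖⁻¹ • v s, v'⟫ s := by
  have hsq := hv.norm_sq.sqrt (pow_ne_zero 2 (norm_ne_zero_iff.mpr h0))
  simp only [Real.sqrt_sq (norm_nonneg _)] at hsq
  convert hsq using 1
  rw [real_inner_smul_left]
  field_simp

theorem HasDerivAt.inv_norm_smul (hv : HasDerivAt v v' s) (h0 : v s ≠ 0) :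
    HasDerivAt (fun r => ‖v r‖⁻¹ • v r)
      (‖v s‖⁻¹ • v' - ⟪‖v s‖⁻¹ • v', ‖v s‖⁻¹ • v s⟫ • (‖v s‖⁻¹ • v s)) s := by
  have hn : ‖v s‖ ≠ 0 := norm_ne_zero_iff.mpr h0
  have hinv : HasDerivAt (fun r => ‖v r‖⁻¹) _ s := (hv.norm h0).inv hn
  convert hinv.fun_smul hv using 1
  simp only [real_inner_smul_left, real_inner_smul_right, real_inner_comm v']
  match_scalars <;> field_simp

end Normalize

section Curve

theorem inner_tang_self {f : ℝ → En n} {x : ℝ} (h : deriv f x ≠ 0) :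
    ⟪tang f x, tang f x⟫ = 1 := by
  simp [tang, aD, norm_smul, h]

theorem inner_nS_tang {f : ℝ → En n} (g : ℝ → En n) {x : ℝ} (h : deriv f x ≠ 0) :
    ⟪nS f g x, tang f x⟫ = 0 := by
  simp only [nS, inner_sub_left, real_inner_smul_left, inner_tang_self h, mul_one, sub_self]

theorem deriv_tang {f : ℝ → En n} {x : ℝ} (h : deriv f x ≠ 0) :
    deriv (tang f) x = ‖deriv f x‖ • curv f x := by
  simp [curv, aD, smul_smul, h]

end Curve

section Flow

variable {f : ℝ → ℝ → En n}

theorem contDiffAt_uncurry_tang {k m : WithTop ℕ∞} (hf : ContDiff ℝ m (uncurry f))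
    (hkm : k + 1 ≤ m) {s x : ℝ} (h : deriv (f s) x ≠ 0) :
    ContDiffAt ℝ k (uncurry fun r => tang (f r)) (s, x) := by
  have hfx := (hf.uncurry_deriv_right hkm).contDiffAt (x := (s, x))
  exact ((hfx.norm ℝ h).inv (norm_ne_zero_iff.mpr h)).smul hfx

theorem hasDerivAt_tang_time {s x : ℝ} (hf : ContDiffAt ℝ 2 (uncurry f) (s, x))
    (h : deriv (f s) x ≠ 0) : HasDerivAt (fun r => tang (f r) x) (nS (f s) (pT f s) x) s :=
  (hasDerivAt_deriv_comm hf).inv_norm_smul h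

theorem eventually_deriv_ne_zero (hf : ContDiff ℝ 1 (uncurry f)) {t x : ℝ}
    (h : deriv (f t) x ≠ 0) : ∀ᶠ q in 𝓝 (t, x), deriv (f q.1) q.2 ≠ 0 :=
  (hf.uncurry_deriv_right (k := 0) (by norm_num)).continuous.continuousAt.eventually_ne h

theorem hasDerivAt_deriv_tang_of_natural_boundary {ζ : En n} {t x : ℝ}
    (hf : ContDiff ℝ 2 (uncurry f)) (hreg : deriv (f t) x ≠ 0)
    (hVτ : ⟪deriv (pT f t) x, tang (f t) x⟫ = 0)
    (hκ : ∀ᶠ s in 𝓝 t, curv (f s) x = ζ - ⟪ζ, tang (f s) x⟫ • tang (f s) x) :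
    HasDerivAt (fun s => deriv (tang (f s)) x)
      (‖deriv (f t) x‖ • -(⟪ζ, tang (f t) x⟫ • nS (f t) (pT f t) x
        + ⟪ζ, nS (f t) (pT f t) x⟫ • tang (f t) x)) t := by
  have hnorm : HasDerivAt (fun s => ‖deriv (f s) x‖) 0 t := by
    convert (hasDerivAt_deriv_comm hf.contDiffAt).norm hreg using 1
    rw [real_inner_comm]
    exact hVτ.symm
  have hcurv : (fun s => deriv (tang (f s)) x) =ᶠ[𝓝 t]
      fun s => ‖deriv (f s) x‖ • (ζ - ⟪ζ, tang (f s) x⟫ • tang (f s) x) := by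
    filter_upwards [hκ, ((Continuous.prodMk_left x).tendsto t).eventually
      (eventually_deriv_ne_zero (hf.of_le (by norm_num)) hreg)] with s hs hs'
    rw [deriv_tang hs', hs]
  have hτ := hasDerivAt_tang_time hf.contDiffAt hreg
  have hζτ := ((hasDerivAt_const t ζ).inner ℝ hτ).fun_smul hτ
  refine HasDerivAt.congr_of_eventuallyEq ?_ hcurv
  convert hnorm.fun_smul ((hasDerivAt_const t ζ).fun_sub hζτ) using 1
  simp only [inner_zero_left, add_zero, zero_smul, zero_sub]

theorem nS_nS_pT_of_natural_boundary {ζ : En n} {t x : ℝ} (hf : ContDiff ℝ 3 (uncurry f))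
    (hreg : deriv (f t) x ≠ 0) (hVτ : ⟪deriv (pT f t) x, tang (f t) x⟫ = 0)
    (hκ : ∀ᶠ s in 𝓝 t, curv (f s) x = ζ - ⟪ζ, tang (f s) x⟫ • tang (f s) x) :
    nS (f t) (nS (f t) (pT f t)) x = -⟪ζ, tang (f t) x⟫ • nS (f t) (pT f t) x := by
  have hf2 : ContDiff ℝ 2 (uncurry f) := hf.of_le (by norm_num)
  set N := nS (f t) (pT f t)
  set τ := tang (f t) x
  have hN : N =ᶠ[𝓝 x] pT (fun s => tang (f s)) t := by
    filter_upwards [((Continuous.prodMk_right t).tendsto x).eventually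
      (eventually_deriv_ne_zero (hf.of_le (by norm_num)) hreg)] with y hy
    exact (hasDerivAt_tang_time hf2.contDiffAt hy).deriv.symm
  have hderiv_N : deriv N x = ‖deriv (f t) x‖ • -(⟪ζ, τ⟫ • N x + ⟪ζ, N x⟫ • τ) := by
    rw [hN.deriv_eq]
    exact (hasDerivAt_deriv_comm (contDiffAt_uncurry_tang hf (by norm_num) hreg)).unique
      (hasDerivAt_deriv_tang_of_natural_boundary hf2 hreg hVτ hκ)
  have haD : aD (f t) N x = -(⟪ζ, τ⟫ • N x + ⟪ζ, N x⟫ • τ) := by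
    rw [aD, hderiv_N, smul_smul, inv_mul_cancel₀ (norm_ne_zero_iff.mpr hreg), one_smul]
  rw [show nS (f t) N x = aD (f t) N x - ⟪aD (f t) N x, τ⟫ • τ from rfl, haD, inner_neg_left,
    inner_add_left, real_inner_smul_left, real_inner_smul_left, inner_tang_self hreg,
    inner_nS_tang _ hreg]
  module

end Flow

theorem boundary_second_derivative_velocity_general (n : ℕ)
    (T : ℝ) (ζ : En n)
    (f : ℝ → ℝ → En n)
    (hsmooth : ContDiff ℝ (⊤ : ℕ∞) (Function.uncurry f))
    (hreg : ∀ t ∈ Set.Ico (0:ℝ) T, ∀ x ∈ Set.Icc (0:ℝ) 1, deriv (f t) x ≠ 0)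
    (hnormalflow : ∀ t ∈ Set.Ioo (0:ℝ) T, ∀ x ∈ Set.Ioo (0:ℝ) 1,
      ⟪pT f t x, tang (f t) x⟫ = 0)
    (hbd₀ : ∀ t ∈ Set.Ico (0:ℝ) T, f t 0 = f 0 0)
    (hbd₁ : ∀ t ∈ Set.Ico (0:ℝ) T, f t 1 = f 0 1)
    (hnat : ∀ t ∈ Set.Ico (0:ℝ) T, ∀ x ∈ ({0, 1} : Set ℝ),
      curv (f t) x = ζ - ⟪ζ, tang (f t) x⟫ • tang (f t) x) :
    ∀ t ∈ Set.Ioo (0:ℝ) T, ∀ x ∈ ({0, 1} : Set ℝ),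
      nS (f t) (nS (f t) (pT f t)) x = -⟪ζ, tang (f t) x⟫ • nS (f t) (pT f t) x := by
  intro t ht x hx
  have hx_Icc : x ∈ Icc (0 : ℝ) 1 := by rcases hx with rfl | rfl <;> norm_num
  have ht_nhds : Ico 0 T ∈ 𝓝 t := mem_of_superset (isOpen_Ioo.mem_nhds ht) Ioo_subset_Ico_self
  have hf : ContDiff ℝ 3 (uncurry f) := hsmooth.of_le (WithTop.coe_le_coe.mpr le_top)
  have hreg_tx := hreg t (Ioo_subset_Ico_self ht) x hx_Icc
  have hV : pT f t x = 0 := by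
    have hfixed : (fun s => f s x) =ᶠ[𝓝 t] fun _ => f 0 x := by
      filter_upwards [ht_nhds] with s hs
      rcases hx with rfl | rfl
      exacts [hbd₀ s hs, hbd₁ s hs]
    exact hfixed.deriv_eq.trans (deriv_const t _)
  have hVτ : ⟪deriv (pT f t) x, tang (f t) x⟫ = 0 := by
    have hV' : DifferentiableAt ℝ (pT f t) x :=
      ((hf.uncurry_deriv_left (k := 1) (by norm_num)).differentiable one_ne_zero
        (t, x)).hasFDerivAt.hasDerivAt_prodMk_right.differentiableAt
    have hτ' : DifferentiableAt ℝ (tang (f t)) x :=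
      ((contDiffAt_uncurry_tang hf (k := 1) (by norm_num) hreg_tx).differentiableAt
        one_ne_zero).hasFDerivAt.hasDerivAt_prodMk_right.differentiableAt
    have hinner := hV'.hasDerivAt.inner ℝ hτ'.hasDerivAt
    have := deriv_eq_zero_of_eq_zero_on_Ioo zero_lt_one hx_Icc hinner.differentiableAt
      (hnormalflow t ht)
    rwa [hinner.deriv, hV, inner_zero_left, zero_add] at this
  refine nS_nS_pT_of_natural_boundary hf hreg_tx hVτ ?_
  filter_upwards [ht_nhds] with s hs using hnat s hs x hx

/-- At the boundary, under a purely normal flow with fixed endpoints and natural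
boundary conditions: `∇ₛ²(∂ₜf) = -⟨ζ,τ⟩ ∇ₛ(∂ₜf)`. -/
theorem boundary_second_derivative_velocity (n : ℕ) (hn : 2 ≤ n)
    (T : ℝ) (hT : 0 < T) (ζ : En n)
    (f : ℝ → ℝ → En n)
    (hsmooth : ContDiff ℝ (⊤ : ℕ∞) (Function.uncurry f))
    (hreg : ∀ t ∈ Set.Ico (0:ℝ) T, ∀ x ∈ Set.Icc (0:ℝ) 1, deriv (f t) x ≠ 0)
    (hnormalflow : ∀ t ∈ Set.Ioo (0:ℝ) T, ∀ x ∈ Set.Ioo (0:ℝ) 1,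
      ⟪pT f t x, tang (f t) x⟫ = 0)
    (hbd₀ : ∀ t ∈ Set.Ico (0:ℝ) T, f t 0 = f 0 0)
    (hbd₁ : ∀ t ∈ Set.Ico (0:ℝ) T, f t 1 = f 0 1)
    (hnat : ∀ t ∈ Set.Ico (0:ℝ) T, ∀ x ∈ ({0, 1} : Set ℝ),
      curv (f t) x = ζ - ⟪ζ, tang (f t) x⟫ • tang (f t) x) :
    ∀ t ∈ Set.Ioo (0:ℝ) T, ∀ x ∈ ({0, 1} : Set ℝ),
      nS (f t) (nS (f t) (pT f t)) x = -⟪ζ, tang (f t) x⟫ • nS (f t) (pT f t) x :=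
  boundary_second_derivative_velocity_general n T ζ f hsmooth hreg hnormalflow hbd₀ hbd₁ hnat

end
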